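/- arXiv:2110.06910 — 3 statements merged into one kernel-verified Lean document; each statement's English description precedes it below -/
import Mathlib

section
/- Let $\eta_t = (I - \gamma_t \widetilde\Sigma)\eta_{t-1}$ for $t \geq 1$ with $\eta_0 = f^*$, where $\widetilde\Sigma$ is a symmetric positive semi-definite matrix and $0 < \gamma_t \leq 1/\|\widetilde\Sigma\|_2$. Then with $\bar\eta_n = \frac{1}{n}\sum_{t=0}^{n-1}\eta_t$, one has $\langle \bar\eta_n, \widetilde\Sigma \bar\eta_n \rangle \leq \frac{1}{n}\max_{\lambda \in \mathrm{spec}(\widetilde\Sigma)} \lambda \sum_{t=0}^{n-1} \prod_{i=1}^{t}(1 - \gamma_i \lambda)^2 \cdot \|f^*\|^2$. -/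
/-!
In the orthonormal eigenbasis of `S` the recursion decouples: the `i`-th coordinate of `η t` is
`∏ j ∈ Icc 1 t, (1 - γ j λᵢ)` times that of `f*`. Hence the quadratic form at the average is
`∑ᵢ λᵢ (mean over t of these products)² cᵢ²`, where `cᵢ` are the coordinates of `f*`. Since the
square of a mean is at most the mean of the squares, the `i`-th term is at most
`(1/n) λᵢ ∑ₜ ∏ⱼ (1 - γ j λᵢ)² cᵢ²`, which is at most `1/n` times the maximum over the spectrum
times `cᵢ²`; Parseval sums the `cᵢ²` to `‖f*‖²`.
-/

open Matrix Finset WithLp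

lemma mul_sq_mean_mul_sq_le {a M : ℝ} (ha : 0 ≤ a) (f : ℕ → ℝ) (n : ℕ)
    (hM : a * ∑ t ∈ range n, f t ^ 2 ≤ M) (x : ℝ) :
    a * ((∑ t ∈ range n, f t) / n * x) ^ 2 ≤ 1 / n * M * x ^ 2 := by
  have hmean := sum_div_card_sq_le_sum_sq_div_card (s := range n) (f := f)
  rw [card_range] at hmean
  calc a * ((∑ t ∈ range n, f t) / n * x) ^ 2
      = a * ((∑ t ∈ range n, f t) / n) ^ 2 * x ^ 2 := by ring
    _ ≤ a * ((∑ t ∈ range n, f t ^ 2) / n) * x ^ 2 := by gcongr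
    _ = 1 / n * (a * ∑ t ∈ range n, f t ^ 2) * x ^ 2 := by ring
    _ ≤ 1 / n * M * x ^ 2 := by gcongr

lemma OrthonormalBasis.dotProduct_eq_sum_repr_mul_repr {ι : Type*} [Fintype ι]
    (b : OrthonormalBasis ι ℝ (EuclideanSpace ℝ ι)) (v w : ι → ℝ) :
    v ⬝ᵥ w = ∑ i, b.repr (toLp 2 v) i * b.repr (toLp 2 w) i := by
  simp only [b.repr_apply_apply, ← real_inner_comm (b _) (toLp 2 v), b.sum_inner_mul_inner,
    EuclideanSpace.inner_toLp_toLp, star_trivial, dotProduct_comm]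

namespace Matrix.IsHermitian

variable {𝕜 ι : Type*} [RCLike 𝕜] [Fintype ι] [DecidableEq ι]

lemma eigenvectorBasis_repr_mulVec {A : Matrix ι ι 𝕜} (hA : A.IsHermitian) (v : ι → 𝕜)
    (i : ι) :
    hA.eigenvectorBasis.repr (toLp 2 (A *ᵥ v)) i =
      hA.eigenvalues i * hA.eigenvectorBasis.repr (toLp 2 v) i := by
  have heig : toEuclideanLin A (hA.eigenvectorBasis i) =
      hA.eigenvalues i • hA.eigenvectorBasis i := by
    change toLp 2 (A *ᵥ ⇑(hA.eigenvectorBasis i)) = _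
    rw [hA.mulVec_eigenvectorBasis, toLp_smul, toLp_ofLp]
  simp only [OrthonormalBasis.repr_apply_apply]
  rw [← toLpLin_apply, ← isSymmetric_toEuclideanLin_iff.mpr hA, heig,
    RCLike.real_smul_eq_coe_smul (K := 𝕜), inner_smul_left, RCLike.conj_ofReal]

variable {A : Matrix ι ι ℝ}

lemma dotProduct_mulVec_eq_sum_eigenvalues_mul_sq (hA : A.IsHermitian) (v : ι → ℝ) :
    v ⬝ᵥ A *ᵥ v = ∑ i, hA.eigenvalues i * hA.eigenvectorBasis.repr (toLp 2 v) i ^ 2 := by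
  rw [hA.eigenvectorBasis.dotProduct_eq_sum_repr_mul_repr]
  refine sum_congr rfl fun i _ => ?_
  rw [hA.eigenvectorBasis_repr_mulVec, RCLike.ofReal_real_eq_id, id]
  ring

lemma eigenvectorBasis_repr_iterate_eq_prod (hA : A.IsHermitian) (γ : ℕ → ℝ) (η : ℕ → ι → ℝ)
    (hrec : ∀ t, 1 ≤ t → η t = η (t - 1) - γ t • (A *ᵥ η (t - 1))) (t : ℕ) (i : ι) :
    hA.eigenvectorBasis.repr (toLp 2 (η t)) i =
      (∏ j ∈ Icc 1 t, (1 - γ j * hA.eigenvalues i)) *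
        hA.eigenvectorBasis.repr (toLp 2 (η 0)) i := by
  induction t with
  | zero => simp
  | succ t ih =>
    rw [hrec (t + 1) (Nat.le_add_left 1 t), Nat.add_sub_cancel, toLp_sub, toLp_smul, map_sub,
      map_smul, PiLp.sub_apply, PiLp.smul_apply, hA.eigenvectorBasis_repr_mulVec,
      RCLike.ofReal_real_eq_id, id, prod_Icc_succ_top (Nat.le_add_left 1 t), ih, smul_eq_mul]
    ring

end Matrix.IsHermitian

theorem stmt_6_general (m n : ℕ) (hm : 0 < m)
    (S : Matrix (Fin m) (Fin m) ℝ) (hS : S.PosSemidef)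
    (γ : ℕ → ℝ)
    (fstar : Fin m → ℝ) (η : ℕ → Fin m → ℝ)
    (h0 : η 0 = fstar)
    (hrec : ∀ t, 1 ≤ t → η t = η (t - 1) - γ t • (S *ᵥ η (t - 1))) :
    ((n : ℝ)⁻¹ • ∑ t ∈ Finset.range n, η t) ⬝ᵥ
        (S *ᵥ ((n : ℝ)⁻¹ • ∑ t ∈ Finset.range n, η t))
      ≤ (1 / (n : ℝ)) *
        (Finset.univ.sup' (Finset.univ_nonempty_iff.mpr ⟨⟨0, hm⟩⟩)
          (fun i => hS.1.eigenvalues i * ∑ t ∈ Finset.range n,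
            ∏ j ∈ Finset.Icc 1 t, (1 - γ j * hS.1.eigenvalues i) ^ 2))
        * (fstar ⬝ᵥ fstar) := by
  set lam := hS.1.eigenvalues
  set c : (Fin m → ℝ) → Fin m → ℝ := fun v => hS.1.eigenvectorBasis.repr (toLp 2 v)
  set M := univ.sup' (univ_nonempty_iff.mpr ⟨⟨0, hm⟩⟩)
    (fun i => lam i * ∑ t ∈ range n, ∏ j ∈ Icc 1 t, (1 - γ j * lam i) ^ 2)
  set p : Fin m → ℕ → ℝ := fun i t => ∏ j ∈ Icc 1 t, (1 - γ j * lam i)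
  set ηbar := (n : ℝ)⁻¹ • ∑ t ∈ range n, η t
  have hcoord (i : Fin m) : c ηbar i = (∑ t ∈ range n, p i t) / n * c fstar i := by
    simp only [c, ηbar, toLp_smul, toLp_sum, map_smul, map_sum, PiLp.smul_apply, ofLp_sum,
      Finset.sum_apply, smul_eq_mul]
    rw [← h0, div_eq_inv_mul, mul_assoc, sum_mul]
    exact congrArg _ <| sum_congr rfl fun t _ =>
      hS.1.eigenvectorBasis_repr_iterate_eq_prod γ η hrec t i
  have hterm (i : Fin m) : lam i * c ηbar i ^ 2 ≤ 1 / n * M * c fstar i ^ 2 := by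
    rw [hcoord]
    refine mul_sq_mean_mul_sq_le (hS.eigenvalues_nonneg i) (p i) n ?_ _
    simp only [p, ← prod_pow]
    exact le_sup' (fun i => lam i * ∑ t ∈ range n, ∏ j ∈ Icc 1 t, (1 - γ j * lam i) ^ 2)
      (mem_univ i)
  rw [hS.1.dotProduct_mulVec_eq_sum_eigenvalues_mul_sq,
    hS.1.eigenvectorBasis.dotProduct_eq_sum_repr_mul_repr, mul_sum]
  exact sum_le_sum fun i _ => (hterm i).trans_eq (by ring)

theorem stmt_6 (m n : ℕ) (hm : 0 < m) (hn : 0 < n)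
    (S : Matrix (Fin m) (Fin m) ℝ) (hS : S.PosSemidef)
    (γ : ℕ → ℝ) (hγpos : ∀ t, 1 ≤ t → 0 < γ t)
    (hγ : ∀ t, 1 ≤ t → ∀ i, γ t * hS.1.eigenvalues i ≤ 1)
    (fstar : Fin m → ℝ) (η : ℕ → Fin m → ℝ)
    (h0 : η 0 = fstar)
    (hrec : ∀ t, 1 ≤ t → η t = η (t - 1) - γ t • (S *ᵥ η (t - 1))) :
    ((n : ℝ)⁻¹ • ∑ t ∈ Finset.range n, η t) ⬝ᵥ
        (S *ᵥ ((n : ℝ)⁻¹ • ∑ t ∈ Finset.range n, η t))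
      ≤ (1 / (n : ℝ)) *
        (Finset.univ.sup' (Finset.univ_nonempty_iff.mpr ⟨⟨0, hm⟩⟩)
          (fun i => hS.1.eigenvalues i * ∑ t ∈ Finset.range n,
            ∏ j ∈ Finset.Icc 1 t, (1 - γ j * hS.1.eigenvalues i) ^ 2))
        * (fstar ⬝ᵥ fstar) :=
  stmt_6_general m n hm S hS γ fstar η h0 hrec
end

section
/- For any $\lambda > 0$, $\gamma_0 > 0$, $\zeta \in [0,1)$, and integer $n \geq 1$: $\sum_{t=0}^{n-1} \exp\left(-2\gamma_0 \lambda \frac{(t+1)^{1-\zeta}-1}{1-\zeta}\right) \leq 1 + \min\left\{\frac{n^\zeta}{2\gamma_0\lambda},\; n\right\}$. -/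
/-!
Each term is at most `1`, which gives the bound `n`. For the other bound, concavity of `x ↦ x ^ p`
(`p = 1 - ζ`) gives `((t + 1) ^ p - 1) / p ≥ t (t + 1) ^ (-ζ) ≥ t n ^ (-ζ)` for `t < n`, so the sum is
dominated by the geometric series `∑ exp (-x t)` with `x = 2 γ₀ λ n ^ (-ζ)`, whose value
`e ^ x / (e ^ x - 1) = 1 + 1 / (e ^ x - 1)` is at most `1 + 1 / x`.
-/

open Real Finset

theorem mul_sub_one_mul_rpow_sub_one_le_rpow_sub_one {x p : ℝ} (hx : 0 < x) (hp0 : 0 ≤ p)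
    (hp1 : p ≤ 1) : p * (x - 1) * x ^ (p - 1) ≤ x ^ p - 1 := by
  -- Bernoulli's inequality at `x⁻¹ = 1 + (x⁻¹ - 1)`, multiplied through by `x ^ p`.
  have bernoulli : x⁻¹ ^ p ≤ 1 + p * (x⁻¹ - 1) := by
    simpa using rpow_one_add_le_one_add_mul_self (s := x⁻¹ - 1) (by linarith [inv_pos.2 hx]) hp0 hp1
  have hxp : 0 < x ^ p := rpow_pos_of_pos hx p
  rw [inv_rpow hx.le, inv_le_iff_one_le_mul₀ hxp] at bernoulli
  have rpow_sub_one_eq : x ^ (p - 1) = x ^ p * x⁻¹ := by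
    rw [rpow_sub_one hx.ne', div_eq_mul_inv]
  have cancel : x ^ p * x⁻¹ * x = x ^ p := by field_simp
  rw [rpow_sub_one_eq]
  nlinarith

theorem sum_range_exp_neg_mul_le {x : ℝ} (hx : 0 < x) (n : ℕ) :
    ∑ t ∈ range n, exp (-(x * t)) ≤ 1 + x⁻¹ := by
  have hr0 : 0 ≤ exp (-x) := (exp_pos _).le
  have hr1 : exp (-x) < 1 := exp_lt_one_iff.2 (neg_lt_zero.2 hx)
  calc ∑ t ∈ range n, exp (-(x * t)) = ∑ t ∈ Ico 0 n, exp (-x) ^ t := by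
        rw [range_eq_Ico]
        refine sum_congr rfl fun t _ => ?_
        rw [← exp_nat_mul]; ring_nf
    _ ≤ exp (-x) ^ 0 / (1 - exp (-x)) := geom_sum_Ico_le_of_lt_one hr0 hr1
    _ = 1 + (exp x - 1)⁻¹ := by
        have : exp x - 1 ≠ 0 := by linarith [add_one_le_exp x]
        rw [exp_neg]; field_simp; ring
    _ ≤ 1 + x⁻¹ := by gcongr; linarith [add_one_le_exp x]

theorem exp_neg_mul_rpow_sub_one_div_le_one {c p : ℝ} (hc : 0 ≤ c) (hp : 0 < p) (t : ℕ) :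
    exp (-(c * ((((t : ℝ) + 1) ^ p - 1) / p))) ≤ 1 := by
  have : 1 ≤ ((t : ℝ) + 1) ^ p := one_le_rpow (by linarith [t.cast_nonneg (α := ℝ)]) hp.le
  rw [exp_le_one_iff, neg_nonpos]
  exact mul_nonneg hc (div_nonneg (by linarith) hp.le)

theorem sum_range_exp_neg_mul_rpow_sub_one_div_le_natCast {c p : ℝ} (hc : 0 ≤ c) (hp : 0 < p)
    (n : ℕ) : ∑ t ∈ range n, exp (-(c * ((((t : ℝ) + 1) ^ p - 1) / p))) ≤ n := by
  simpa using sum_le_sum fun t (_ : t ∈ range n) => exp_neg_mul_rpow_sub_one_div_le_one hc hp t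

theorem exp_neg_mul_rpow_sub_one_div_le {c p : ℝ} (hc : 0 ≤ c) (hp0 : 0 < p) (hp1 : p ≤ 1)
    {n t : ℕ} (ht : t < n) :
    exp (-(c * ((((t : ℝ) + 1) ^ p - 1) / p))) ≤ exp (-(c * (n : ℝ) ^ (p - 1) * t)) := by
  have htn : (t : ℝ) + 1 ≤ n := by exact_mod_cast ht
  have hpos : (0 : ℝ) < t + 1 := by positivity
  have concave : p * t * ((t : ℝ) + 1) ^ (p - 1) ≤ ((t : ℝ) + 1) ^ p - 1 := by
    simpa using mul_sub_one_mul_rpow_sub_one_le_rpow_sub_one hpos hp0.le hp1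
  have mono : (n : ℝ) ^ (p - 1) ≤ ((t : ℝ) + 1) ^ (p - 1) :=
    rpow_le_rpow_of_nonpos hpos htn (by linarith)
  rw [exp_le_exp, neg_le_neg_iff, mul_assoc]
  gcongr c * ?_
  rw [le_div_iff₀ hp0]
  calc (n : ℝ) ^ (p - 1) * t * p = p * t * (n : ℝ) ^ (p - 1) := by ring
    _ ≤ p * t * ((t : ℝ) + 1) ^ (p - 1) := by gcongr
    _ ≤ ((t : ℝ) + 1) ^ p - 1 := concave

theorem sum_range_exp_neg_mul_rpow_sub_one_div_le {c p : ℝ} (hc : 0 < c) (hp0 : 0 < p)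
    (hp1 : p ≤ 1) (n : ℕ) :
    ∑ t ∈ range n, exp (-(c * ((((t : ℝ) + 1) ^ p - 1) / p))) ≤ 1 + (n : ℝ) ^ (1 - p) / c := by
  rcases n.eq_zero_or_pos with rfl | hn
  · simp only [range_zero, sum_empty]; positivity
  have hx : 0 < c * (n : ℝ) ^ (p - 1) := by positivity
  calc ∑ t ∈ range n, exp (-(c * ((((t : ℝ) + 1) ^ p - 1) / p)))
      ≤ ∑ t ∈ range n, exp (-(c * (n : ℝ) ^ (p - 1) * t)) :=
        sum_le_sum fun t ht => exp_neg_mul_rpow_sub_one_div_le hc.le hp0 hp1 (mem_range.1 ht)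
    _ ≤ 1 + (c * (n : ℝ) ^ (p - 1))⁻¹ := sum_range_exp_neg_mul_le hx n
    _ = 1 + (n : ℝ) ^ (1 - p) / c := by
        rw [← neg_sub, rpow_neg (Nat.cast_nonneg n), mul_inv, inv_inv, div_eq_mul_inv, mul_comm]

theorem stmt_7_general (lam γ0 ζ : ℝ) (hlam : 0 < lam) (hγ : 0 < γ0)
    (hζ0 : 0 ≤ ζ) (hζ1 : ζ < 1) (n : ℕ) :
    ∑ t ∈ Finset.range n,
        Real.exp (-(2 * γ0 * lam * ((((t : ℝ) + 1) ^ (1 - ζ) - 1) / (1 - ζ))))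
      ≤ 1 + min ((n : ℝ) ^ ζ / (2 * γ0 * lam)) (n : ℝ) := by
  have hc : 0 < 2 * γ0 * lam := by positivity
  have hp : 0 < 1 - ζ := by linarith
  rw [← min_add_add_left]
  refine le_min ?_ ?_
  · simpa using sum_range_exp_neg_mul_rpow_sub_one_div_le hc hp (by linarith) n
  · linarith [sum_range_exp_neg_mul_rpow_sub_one_div_le_natCast hc.le hp n]

theorem stmt_7 (lam γ0 ζ : ℝ) (hlam : 0 < lam) (hγ : 0 < γ0)
    (hζ0 : 0 ≤ ζ) (hζ1 : ζ < 1) (n : ℕ) (hn : 1 ≤ n) :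
    ∑ t ∈ Finset.range n,
        Real.exp (-(2 * γ0 * lam * ((((t : ℝ) + 1) ^ (1 - ζ) - 1) / (1 - ζ))))
      ≤ 1 + min ((n : ℝ) ^ ζ / (2 * γ0 * lam)) (n : ℝ) :=
  stmt_7_general lam γ0 ζ hlam hγ hζ0 hζ1 n
end

section
/- Let $(\alpha_t)_{t\geq 0}$ be square-integrable random vectors in $\mathbb{R}^m$ with $\alpha_0 = 0$, adapted to a filtration $(\mathcal F_t)$, satisfying for each $t\geq 1$: $\mathbb{E}[\|\alpha_t\|^2 \mid \mathcal F_{t-1}] \leq \|\alpha_{t-1}\|^2 + 2\gamma_t^2 h_{t-1} - 2\gamma_t(1 - \gamma_t R)\langle \alpha_{t-1}, \Sigma \alpha_{t-1}\rangle$, where $\Sigma$ is symmetric PSD, $R > 0$, $h_{t-1} \geq 0$ deterministic, and $0 < \gamma_t \leq \gamma_0 < 1/R$ nonincreasing. Then with $\bar\alpha_n = \frac1n\sum_{t=0}^{n-1}\alpha_t$: $\mathbb{E}\langle\bar\alpha_n, \Sigma\bar\alpha_n\rangle \leq \frac{1}{2n(1-\gamma_0 R)}\left(\sum_{k=1}^{n-1}\mathbb{E}\|\alpha_k\|^2\left(\frac{1}{\gamma_{k+1}}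 - \frac{1}{\gamma_k}\right) + 2\sum_{t=0}^{n-1}\gamma_{t+1} h_t\right)$. -/
/-!
Write `a t = E‖α t‖²` and `q t = E⟨α t, Σ α t⟩`. Integrating the conditional recursion gives
`a (t+1) ≤ a t + 2 γ_{t+1}² h_t - 2 γ_{t+1} (1 - γ_{t+1} R) q t`; since `q t ≥ 0` and
`γ_{t+1} ≤ γ₀`, this yields `2 (1 - γ₀ R) q t ≤ (a t - a (t+1)) / γ_{t+1} + 2 γ_{t+1} h_t`.
Summing by parts over `t < n`, with `a 0 = 0` and the final term `-a n / γ_n ≤ 0` dropped,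
bounds `∑ q t`, and Jensen's inequality for the convex quadratic form `x ↦ ⟨x, Σ x⟩` bounds
the quadratic form of the average by the average of the `q t`.
-/

open MeasureTheory Matrix Finset

theorem Matrix.PosSemidef.convexOn_dotProduct_mulVec {ι : Type*} [Fintype ι]
    {S : Matrix ι ι ℝ} (hS : S.PosSemidef) :
    ConvexOn ℝ Set.univ fun x : ι → ℝ => x ⬝ᵥ (S *ᵥ x) := by
  refine ⟨convex_univ, fun x _ y _ a b ha hb hab => ?_⟩
  have hxy : 0 ≤ (x - y) ⬝ᵥ (S *ᵥ (x - y)) := by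
    simpa using hS.dotProduct_mulVec_nonneg (x - y)
  simp only [mulVec_add, mulVec_smul, mulVec_sub, dotProduct_add, add_dotProduct,
    smul_dotProduct, dotProduct_smul, sub_dotProduct, dotProduct_sub, smul_eq_mul] at hxy ⊢
  obtain rfl : b = 1 - a := by linarith
  -- the gap between the two sides is `a b ⟨x - y, S (x - y)⟩`
  nlinarith [mul_nonneg (mul_nonneg ha hb) hxy]

theorem Matrix.PosSemidef.dotProduct_mulVec_average_le {ι κ : Type*} [Fintype ι]
    {S : Matrix ι ι ℝ} (hS : S.PosSemidef) (s : Finset κ) (x : κ → ι → ℝ) :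
    ((#s : ℝ)⁻¹ • ∑ i ∈ s, x i) ⬝ᵥ (S *ᵥ ((#s : ℝ)⁻¹ • ∑ i ∈ s, x i))
      ≤ (#s : ℝ)⁻¹ * ∑ i ∈ s, x i ⬝ᵥ (S *ᵥ x i) := by
  rcases s.eq_empty_or_nonempty with rfl | hs
  · simp
  have hw : ∑ _i ∈ s, (#s : ℝ)⁻¹ = 1 := by
    rw [sum_const, nsmul_eq_mul, mul_inv_cancel₀ (by exact_mod_cast hs.card_ne_zero)]
  simpa only [smul_sum, mul_sum, smul_eq_mul] using
    hS.convexOn_dotProduct_mulVec.map_sum_le (fun _ _ => by positivity) hw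
      (fun _ _ => Set.mem_univ _)

theorem MeasureTheory.integral_le_of_condExp_le {Ω : Type*} {m m₀ : MeasurableSpace Ω}
    {μ : Measure Ω} (hm : m ≤ m₀) [SigmaFinite (μ.trim hm)] {f g : Ω → ℝ}
    (hfg : μ[f|m] ≤ᵐ[μ] g) (hg : Integrable g μ) : ∫ x, f x ∂μ ≤ ∫ x, g x ∂μ :=
  integral_condExp (μ := μ) (f := f) hm ▸ integral_mono_ae integrable_condExp hg hfg

theorem MeasureTheory.integral_le_of_condExp_le_add_sub_mul {Ω : Type*}
    {m m₀ : MeasurableSpace Ω} {μ : Measure Ω} [IsProbabilityMeasure μ] (hm : m ≤ m₀)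
    {f u v : Ω → ℝ} {c d : ℝ} (hfg : μ[f|m] ≤ᵐ[μ] fun x => u x + c - d * v x)
    (hu : Integrable u μ) (hv : Integrable v μ) :
    ∫ x, f x ∂μ ≤ ∫ x, u x ∂μ + c - d * ∫ x, v x ∂μ := by
  have h₁ : Integrable (fun x => u x + c) μ := hu.add (integrable_const c)
  have h₂ := hv.const_mul d
  have hle := integral_le_of_condExp_le hm hfg (h₁.sub h₂)
  rwa [integral_sub h₁ h₂, integral_add hu (integrable_const c), integral_const,
    integral_const_mul, probReal_univ, one_smul] at hle

theorem sum_range_sub_div_eq (a g : ℕ → ℝ) (n : ℕ) :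
    ∑ t ∈ range n, (a t - a (t + 1)) / g (t + 1)
      = a 0 / g 0 + ∑ k ∈ range n, a k * (1 / g (k + 1) - 1 / g k) - a n / g n := by
  induction n with
  | zero => simp
  | succ n ih => rw [sum_range_succ, sum_range_succ, ih]; ring

theorem sum_Icc_one_pred_eq_sum_range {M : Type*} [AddCommMonoid M] {f : ℕ → M}
    (hf : f 0 = 0) (n : ℕ) : ∑ k ∈ Icc 1 (n - 1), f k = ∑ k ∈ range n, f k := by
  refine sum_subset (fun k hk => by simp at hk ⊢; omega) fun k hk hk' => ?_
  obtain rfl : k = 0 := by simp at hk hk'; omega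
  exact hf

theorem two_mul_le_of_descent_step {a a' q g g₀ b R : ℝ} (hg : 0 < g) (hgg₀ : g ≤ g₀)
    (hR : 0 ≤ R) (hq : 0 ≤ q) (h : a' ≤ a + 2 * g ^ 2 * b - 2 * g * (1 - g * R) * q) :
    2 * (1 - g₀ * R) * q ≤ (a - a') / g + 2 * g * b := by
  have hmono : g * R * q ≤ g₀ * R * q := by gcongr
  rw [div_add' _ _ _ hg.ne', le_div_iff₀ hg]
  nlinarith

theorem two_mul_sum_le_of_descent {a q g b : ℕ → ℝ} {C : ℝ} (n : ℕ) (ha₀ : a 0 = 0)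
    (han : 0 ≤ a n) (hgn : 0 ≤ g n)
    (hstep : ∀ t, 2 * C * q t ≤ (a t - a (t + 1)) / g (t + 1) + 2 * g (t + 1) * b t) :
    2 * C * ∑ t ∈ range n, q t
      ≤ ∑ k ∈ Icc 1 (n - 1), a k * (1 / g (k + 1) - 1 / g k)
        + 2 * ∑ t ∈ range n, g (t + 1) * b t := by
  have htel := sum_range_sub_div_eq a g n
  rw [ha₀, zero_div, zero_add] at htel
  rw [sum_Icc_one_pred_eq_sum_range (by simp [ha₀]), mul_sum, mul_sum]
  calc ∑ t ∈ range n, 2 * C * q t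
      ≤ ∑ t ∈ range n, ((a t - a (t + 1)) / g (t + 1) + 2 * g (t + 1) * b t) :=
        sum_le_sum fun t _ => hstep t
    _ ≤ _ := by
        rw [sum_add_distrib, htel]
        have : 0 ≤ a n / g n := div_nonneg han hgn
        simp only [mul_assoc, sub_add_eq_add_sub]
        linarith

theorem stmt_17_general {Ω : Type*} {m0 : MeasurableSpace Ω} (μ : Measure Ω)
    [IsProbabilityMeasure μ] (m : ℕ)
    (F : Filtration ℕ m0) (α : ℕ → Ω → Fin m → ℝ)
    (hα0 : ∀ ω, α 0 ω = 0)
    (S : Matrix (Fin m) (Fin m) ℝ) (hS : S.PosSemidef)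
    (R : ℝ) (hR : 0 < R) (h : ℕ → ℝ)
    (γ : ℕ → ℝ) (hγpos : ∀ t, 0 < γ t) (hγmono : Antitone γ)
    (hγ0 : γ 0 * R < 1)
    (hint1 : ∀ t, Integrable (fun ω => α t ω ⬝ᵥ α t ω) μ)
    (hint2 : ∀ t, Integrable (fun ω => α t ω ⬝ᵥ (S *ᵥ α t ω)) μ)
    (hrec : ∀ t : ℕ, 1 ≤ t →
      (μ[(fun ω => α t ω ⬝ᵥ α t ω)|F (t - 1)]) ≤ᵐ[μ]
        (fun ω => α (t - 1) ω ⬝ᵥ α (t - 1) ω + 2 * γ t ^ 2 * h (t - 1)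
          - 2 * γ t * (1 - γ t * R) * (α (t - 1) ω ⬝ᵥ (S *ᵥ α (t - 1) ω))))
    (n : ℕ) :
    ∫ ω, (((n : ℝ)⁻¹ • ∑ t ∈ Finset.range n, α t ω) ⬝ᵥ
        (S *ᵥ ((n : ℝ)⁻¹ • ∑ t ∈ Finset.range n, α t ω))) ∂μ
      ≤ (1 / (2 * n * (1 - γ 0 * R))) *
        ((∑ k ∈ Finset.Icc 1 (n - 1),
            (∫ ω, α k ω ⬝ᵥ α k ω ∂μ) * (1 / γ (k + 1) - 1 / γ k))
          + 2 * ∑ t ∈ Finset.range n, γ (t + 1) * h t) := by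
  set a : ℕ → ℝ := fun k => ∫ ω, α k ω ⬝ᵥ α k ω ∂μ
  set q : ℕ → ℝ := fun k => ∫ ω, α k ω ⬝ᵥ (S *ᵥ α k ω) ∂μ
  have hC : 0 < 1 - γ 0 * R := by linarith
  have hQ : ∀ x, 0 ≤ x ⬝ᵥ (S *ᵥ x) := fun x => by simpa using hS.dotProduct_mulVec_nonneg x
  have hexp : ∀ t, a (t + 1) ≤ a t + 2 * γ (t + 1) ^ 2 * h t
      - 2 * γ (t + 1) * (1 - γ (t + 1) * R) * q t := fun t =>
    integral_le_of_condExp_le_add_sub_mul (F.le t)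
      (by simpa only [Nat.add_sub_cancel] using hrec (t + 1) (by omega)) (hint1 t) (hint2 t)
  have hsum := two_mul_sum_le_of_descent n (by simp [a, hα0])
    (integral_nonneg fun ω => dotProduct_self_star_nonneg (α n ω)) (hγpos n).le
    fun t => two_mul_le_of_descent_step (hγpos _) (hγmono (Nat.zero_le _)) hR.le
      (integral_nonneg fun ω => hQ _) (hexp t)
  calc _ ≤ ∫ ω, (n : ℝ)⁻¹ * ∑ t ∈ range n, α t ω ⬝ᵥ (S *ᵥ α t ω) ∂μ :=
        integral_mono_of_nonneg (.of_forall fun ω => hQ _)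
          ((integrable_finsetSum _ fun t _ => hint2 t).const_mul _)
          (.of_forall fun ω => by
            simpa only [card_range] using hS.dotProduct_mulVec_average_le (range n) (α · ω))
    _ = (1 / (2 * n * (1 - γ 0 * R))) * (2 * (1 - γ 0 * R) * ∑ t ∈ range n, q t) := by
        rw [integral_const_mul, integral_finsetSum _ fun t _ => hint2 t]
        field_simp
        rfl
    _ ≤ _ := by gcongr

theorem stmt_17 {Ω : Type*} {m0 : MeasurableSpace Ω} (μ : Measure Ω)
    [IsProbabilityMeasure μ] (m : ℕ)
    (F : Filtration ℕ m0) (α : ℕ → Ω → Fin m → ℝ) (hadapted : Adapted F α)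
    (hα0 : ∀ ω, α 0 ω = 0)
    (S : Matrix (Fin m) (Fin m) ℝ) (hS : S.PosSemidef)
    (R : ℝ) (hR : 0 < R) (h : ℕ → ℝ) (hh : ∀ t, 0 ≤ h t)
    (γ : ℕ → ℝ) (hγpos : ∀ t, 0 < γ t) (hγmono : Antitone γ)
    (hγ0 : γ 0 * R < 1)
    (hint1 : ∀ t, Integrable (fun ω => α t ω ⬝ᵥ α t ω) μ)
    (hint2 : ∀ t, Integrable (fun ω => α t ω ⬝ᵥ (S *ᵥ α t ω)) μ)
    (hrec : ∀ t : ℕ, 1 ≤ t →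
      (μ[(fun ω => α t ω ⬝ᵥ α t ω)|F (t - 1)]) ≤ᵐ[μ]
        (fun ω => α (t - 1) ω ⬝ᵥ α (t - 1) ω + 2 * γ t ^ 2 * h (t - 1)
          - 2 * γ t * (1 - γ t * R) * (α (t - 1) ω ⬝ᵥ (S *ᵥ α (t - 1) ω))))
    (n : ℕ) (hn : 1 ≤ n) :
    ∫ ω, (((n : ℝ)⁻¹ • ∑ t ∈ Finset.range n, α t ω) ⬝ᵥ
        (S *ᵥ ((n : ℝ)⁻¹ • ∑ t ∈ Finset.range n, α t ω))) ∂μ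
      ≤ (1 / (2 * n * (1 - γ 0 * R))) *
        ((∑ k ∈ Finset.Icc 1 (n - 1),
            (∫ ω, α k ω ⬝ᵥ α k ω ∂μ) * (1 / γ (k + 1) - 1 / γ k))
          + 2 * ∑ t ∈ Finset.range n, γ (t + 1) * h t) :=
  stmt_17_general μ m F α hα0 S hS R hR h γ hγpos hγmono hγ0 hint1 hint2 hrec n
end
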